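/- arXiv:1607.06927 — 2 statements merged into one kernel-verified Lean document; each statement's English description precedes it below -/
import Mathlib

section
/- The composition dep = dep₁ ; dep₂* is contained in sym = sym₁ ; sym₂*, i.e., if (a,b) ∈ dep then (a,b) ∈ sym. -/
theorem Set.Nonempty.inter_union_union {α : Type*} {s t u v : Set α} (h : (s ∩ v).Nonempty) :
    ((s ∪ t) ∩ (u ∪ v)).Nonempty :=
  h.mono (inter_subset_inter subset_union_left subset_union_right)

/-- dep = dep₁ ; dep₂* is contained in sym = sym₁ ; sym₂*. -/
theorem dep_subset_sym {Expr AS Loc Var : Type*}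
    (Re We : Expr → Set Loc) (Ra Wa : AS → Set Loc)
    (se : Expr → Set Var) (sa : AS → Set Var)
    (hsym2 : ∀ a b : AS, ((Ra a ∪ Wa a) ∩ (Ra b ∪ Wa b)).Nonempty →
      Relation.ReflTransGen (fun x y => (sa x ∩ sa y).Nonempty) a b)
    (hsym1 : ∀ (a : Expr) (b : AS), ((Re a ∪ We a) ∩ (Ra b ∪ Wa b)).Nonempty →
      ∃ c, (se a ∩ sa c).Nonempty ∧
        Relation.ReflTransGen (fun x y => (sa x ∩ sa y).Nonempty) c b) :
    ∀ (a : Expr) (b : AS),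
      (∃ c, (Re a ∩ Wa c).Nonempty ∧
        Relation.ReflTransGen (fun x y => (Ra x ∩ Wa y).Nonempty) c b) →
      ∃ c, (se a ∩ sa c).Nonempty ∧
        Relation.ReflTransGen (fun x y => (sa x ∩ sa y).Nonempty) c b := by
  rintro a b ⟨c, hac, hcb⟩
  have hcb_sym : Relation.ReflTransGen (fun x y => (sa x ∩ sa y).Nonempty) c b :=
    Relation.reflTransGen_closed (fun x y hxy => hsym2 x y hxy.inter_union_union) c b hcb
  obtain ⟨d, had, hdc⟩ := hsym1 a c hac.inter_union_union
  exact ⟨d, had, hdc.trans hcb_sym⟩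
end

section
/- Soundness of the may lockset unlock transfer: if ls_c ⊆ c(s), the released lock l satisfies l ∈ ls_c, l ∈ c(vs), and the transfer U is defined by (1) U(s) = ∅ if |s| = 1 and s ≠ {⋆}; (2) U(s) = s \ vs if |s ∩ vs| = 1, s ≠ {⋆}, vs ≠ {⋆}; (3) U(s) = s otherwise — then ls_c \ {l} ⊆ c(U(s)). -/
def conc {O : Type*} (A : Set O) : Option (Set O) → Set O
  | none => A
  | some s => s

/-- May lockset unlock transfer: (1) `∅` if `|s| = 1` and `s ≠ {⋆}`;
(2) `s \ vs` if `|s ∩ vs| = 1`, `s ≠ {⋆}`, `vs ≠ {⋆}`; (3) `s` otherwise. -/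
noncomputable def mayUnlockT {O : Type*} (vs s : Option (Set O)) : Option (Set O) :=
  match s, vs with
  | some a, some v =>
      if a.ncard = 1 then some (∅ : Set O)
      else if (a ∩ v).ncard = 1 then some (a \ v)
      else some a
  | some a, none => if a.ncard = 1 then some (∅ : Set O) else some a
  | none, _ => none

theorem Set.diff_singleton_eq_empty_of_ncard_eq_one {α : Type*} {s t : Set α} {x : α}
    (ht : t.ncard = 1) (hst : s ⊆ t) (hx : x ∈ s) : s \ {x} = ∅ := by
  obtain ⟨y, rfl⟩ := Set.ncard_eq_one.mp ht
  exact Set.sdiff_eq_empty.mpr fun z hz => (hst hz).trans (hst hx).symm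

theorem Set.diff_singleton_subset_diff_of_ncard_inter_eq_one {α : Type*} {s t u : Set α} {x : α}
    (htu : (t ∩ u).ncard = 1) (hst : s ⊆ t) (hx : x ∈ s) (hxu : x ∈ u) : s \ {x} ⊆ t \ u := by
  obtain ⟨y, hy⟩ := Set.ncard_eq_one.mp htu
  rintro z ⟨hz, hzx⟩
  refine ⟨hst hz, fun hzu => hzx ?_⟩
  have hz' : z ∈ t ∩ u := ⟨hst hz, hzu⟩
  have hx' : x ∈ t ∩ u := ⟨hst hx, hxu⟩
  rw [hy] at hz' hx'
  exact hz'.trans hx'.symm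

/-- soundness of the may lockset unlock transfer. -/
theorem mayUnlockT_sound {O : Type*} (A : Set O) (s vs : Option (Set O))
    (lsc : Set O) (l : O)
    (hls : lsc ⊆ conc A s) (hlsA : lsc ⊆ A)
    (hlmem : l ∈ lsc) (hl : l ∈ conc A vs) :
    lsc \ {l} ⊆ conc A (mayUnlockT vs s) := by
  match s, vs with
  | none, _ => exact Set.sdiff_subset.trans hlsA
  | some a, some v =>
      simp only [conc, mayUnlockT] at hls hl ⊢
      split_ifs with h1 h2
      · exact (Set.diff_singleton_eq_empty_of_ncard_eq_one h1 hls hlmem).subset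
      · exact Set.diff_singleton_subset_diff_of_ncard_inter_eq_one h2 hls hlmem hl
      · exact Set.sdiff_subset.trans hls
  | some a, none =>
      simp only [conc, mayUnlockT] at hls ⊢
      split_ifs with h1
      · exact (Set.diff_singleton_eq_empty_of_ncard_eq_one h1 hls hlmem).subset
      · exact Set.sdiff_subset.trans hls
end
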